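/- arXiv:1306.2423 — 2 statements merged into one kernel-verified Lean document; each statement's English description precedes it below -/
import Mathlib

section
/- If A is an n-by-n complex matrix with ‖A‖ = 1 and ‖A^{m−1}‖ = 1, then A ⊗ J_m is unitarily similar to J_m ⊕ B for some matrix B with w(B) ≤ w(J_m), where J_m is the m-by-m nilpotent Jordan block. -/
open scoped Kronecker InnerProductSpace

/-- The operator norm (spectral norm) of a complex matrix, viewed as an operator
on Euclidean space. -/
noncomputable def opNorm {n : Type*} [Fintype n] [DecidableEq n] (A : Matrix n n ℂ) : ℝ :=
  ‖Matrix.toEuclideanCLM (𝕜 := ℂ) A‖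

/-- The numerical radius of a complex matrix: the supremum of `|⟨Ax, x⟩|` over
unit vectors `x`. -/
noncomputable def numRadius {n : Type*} [Fintype n] [DecidableEq n] (A : Matrix n n ℂ) : ℝ :=
  sSup {r : ℝ | ∃ x : EuclideanSpace ℂ n, ‖x‖ = 1 ∧
    r = ‖⟪x, Matrix.toEuclideanLin A x⟫_ℂ‖}

/-- `A` and `B` are unitarily similar (as operators on Euclidean spaces, allowing
different index types of the same dimension). -/
def UnitSim {n m : Type*} [Fintype n] [DecidableEq n] [Fintype m] [DecidableEq m]
    (A : Matrix n n ℂ) (B : Matrix m m ℂ) : Prop :=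
  ∃ e : EuclideanSpace ℂ n ≃ₗᵢ[ℂ] EuclideanSpace ℂ m,
    ∀ x, Matrix.toEuclideanLin B (e x) = e (Matrix.toEuclideanLin A x)

/-- The `m`-by-`m` nilpotent Jordan block: zero diagonal, ones on the superdiagonal. -/
def Jordan (m : ℕ) : Matrix (Fin m) (Fin m) ℂ :=
  fun i j => if (i : ℕ) + 1 = (j : ℕ) then 1 else 0

/-!
Since `A` is a contraction with `‖A ^ (m - 1)‖ = 1`, some unit vector `x` has
`‖A ^ k x‖ = 1` for all `k < m`, and then `Aᴴ (A ^ (k + 1) x) = A ^ k x`. Hence the orthonormal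
vectors `vⱼ = A ^ (m - 1 - j) x ⊗ eⱼ` satisfy `(A ⊗ J_m) vⱼ = vⱼ₋₁` (and `v₀ ↦ 0`), while
`(A ⊗ J_m)ᴴ` maps them into their span. This span therefore reduces `A ⊗ J_m`, which acts on it
as `J_m`, so in an orthonormal basis extending `v` the operator `A ⊗ J_m` becomes `J_m ⊕ B` with
`B` a compression of `A ⊗ J_m`, and `w(B) ≤ w(A ⊗ J_m)`.

Finally `w(A ⊗ M) ≤ w(M)` for every contraction `A` and entrywise nonnegative `M`: writing
`y = ∑ⱼ zⱼ ⊗ eⱼ`, one has `|⟪y, (A ⊗ M) y⟫| ≤ ∑ⱼₗ Mⱼₗ ‖zⱼ‖ ‖zₗ‖ = ⟪a, M a⟫` with `aⱼ = ‖zⱼ‖`,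
and `‖a‖ = ‖y‖`.
-/

open Matrix
open scoped ComplexOrder

namespace ContinuousLinearMap

variable {𝕜 E F : Type*} [RCLike 𝕜]

lemma exists_norm_eq_one_and_norm_apply_eq_opNorm [NormedAddCommGroup E] [NormedSpace 𝕜 E]
    [NormedAddCommGroup F] [NormedSpace 𝕜 F] [FiniteDimensional 𝕜 E] [Nontrivial E]
    (f : E →L[𝕜] F) : ∃ x, ‖x‖ = 1 ∧ ‖f x‖ = ‖f‖ := by
  have : NormedSpace ℝ E := NormedSpace.restrictScalars ℝ 𝕜 E
  have : ProperSpace E := FiniteDimensional.proper 𝕜 E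
  obtain ⟨x, hx, hfx⟩ := ((isCompact_sphere (0 : E) 1).image f.continuous.norm).sSup_mem
    ((NormedSpace.sphere_nonempty.mpr zero_le_one).image _)
  exact ⟨x, mem_sphere_zero_iff_norm.1 hx, hfx.trans f.sSup_sphere_eq_norm⟩

lemma norm_pow_apply_eq_of_le [NormedAddCommGroup E] [NormedSpace 𝕜 E] {f : E →L[𝕜] E}
    (hf : ‖f‖ ≤ 1) {x : E} {N k : ℕ} (hx : ‖(f ^ N) x‖ = ‖x‖) (hk : k ≤ N) :
    ‖(f ^ k) x‖ = ‖x‖ := by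
  have hle : ∀ j (v : E), ‖(f ^ j) v‖ ≤ ‖v‖ := by
    intro j
    induction j with
    | zero => simp
    | succ j ih => exact fun v => (ih (f v)).trans (f.le_of_opNorm_le hf v |>.trans_eq (one_mul _))
  refine le_antisymm (hle k x) ?_
  calc ‖x‖ = ‖(f ^ (N - k)) ((f ^ k) x)‖ := by
        rw [← hx, ← Nat.sub_add_cancel hk, pow_add, Nat.add_sub_cancel]; rfl
    _ ≤ ‖(f ^ k) x‖ := hle _ _

lemma adjoint_apply_apply_eq_self [NormedAddCommGroup E] [InnerProductSpace 𝕜 E] [CompleteSpace E]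
    [NormedAddCommGroup F] [InnerProductSpace 𝕜 F] [CompleteSpace F] {f : E →L[𝕜] F}
    (hf : ‖f‖ ≤ 1) {u : E} (hu : ‖f u‖ = ‖u‖) : adjoint f (f u) = u := by
  have h1 : ‖adjoint f (f u)‖ ≤ ‖u‖ := by
    simpa [hu] using
      (adjoint f).le_of_opNorm_le ((LinearIsometryEquiv.norm_map adjoint f).trans_le hf) (f u)
  have h2 : ‖adjoint f (f u) - u‖ ^ 2 ≤ 0 := by
    rw [@norm_sub_sq 𝕜, adjoint_inner_left, inner_self_eq_norm_sq, hu]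
    nlinarith [norm_nonneg (adjoint f (f u))]
  exact sub_eq_zero.1 (norm_eq_zero.1 (by nlinarith [norm_nonneg (adjoint f (f u) - u)]))

end ContinuousLinearMap

section OrthonormalBasis

variable {𝕜 E κ : Type*} [RCLike 𝕜] [NormedAddCommGroup E] [InnerProductSpace 𝕜 E]
  [FiniteDimensional 𝕜 E] [Fintype κ]

lemma Orthonormal.exists_orthonormalBasis_sum {v : κ → E} (hv : Orthonormal 𝕜 v) {k : ℕ}
    (hk : Module.finrank 𝕜 E = Fintype.card κ + k) :
    ∃ b : OrthonormalBasis (κ ⊕ Fin k) 𝕜 E,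
      (∀ j, b (.inl j) = v j) ∧ ∀ i, b (.inr i) ∈ (Submodule.span 𝕜 (Set.range v))ᗮ := by
  classical
  set V := Submodule.span 𝕜 (Set.range v)
  have hVk : Module.finrank 𝕜 Vᗮ = k := by
    have := V.finrank_add_finrank_orthogonal
    rw [finrank_span_eq_card hv.linearIndependent] at this
    omega
  set w := (stdOrthonormalBasis 𝕜 Vᗮ).reindex (finCongr hVk)
  set u : κ ⊕ Fin k → E := Sum.elim v fun i => (w i : E)
  have hu : Orthonormal 𝕜 u := by
    have hw : Orthonormal 𝕜 fun i => (w i : E) := w.orthonormal.comp_linearIsometry Vᗮ.subtypeₗᵢ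
    have hvw : ∀ j i, ⟪v j, (w i : E)⟫_𝕜 = 0 := fun j i =>
      Submodule.inner_right_of_mem_orthogonal (Submodule.subset_span (Set.mem_range_self j)) (w i).2
    rw [orthonormal_iff_ite] at hv hw ⊢
    rintro (j | i) (j' | i')
    · simpa [u] using hv j j'
    · simpa [u] using hvw j i'
    · simpa [u, inner_eq_zero_symm] using hvw j' i
    · simpa [u] using hw i i'
  have hcard : Fintype.card (κ ⊕ Fin k) = Module.finrank 𝕜 E := by simp [hk]
  refine ⟨OrthonormalBasis.mk hu (hu.linearIndependent.span_eq_top_of_card_eq_finrank' hcard).ge,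
    fun j => by simp [u], fun i => by simp [u]⟩

end OrthonormalBasis

section MatrixOperator

variable {ι κ : Type*} [Fintype ι] [DecidableEq ι] [Fintype κ] [DecidableEq κ]

lemma norm_toEuclideanLin_apply_le {A : Matrix ι ι ℂ} (hA : opNorm A ≤ 1)
    (v : EuclideanSpace ℂ ι) : ‖toEuclideanLin A v‖ ≤ ‖v‖ := by
  simpa [← coe_toEuclideanCLM_eq_toEuclideanLin] using
    (toEuclideanCLM (𝕜 := ℂ) A).le_of_opNorm_le hA v

lemma toEuclideanLin_conjTranspose_apply (A : Matrix ι ι ℂ) (v : EuclideanSpace ℂ ι) :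
    toEuclideanLin Aᴴ v = ContinuousLinearMap.adjoint (toEuclideanCLM (𝕜 := ℂ) A) v := by
  rw [← star_eq_conjTranspose, ← ContinuousLinearMap.star_eq_adjoint, ← map_star]
  rfl

lemma norm_inner_le_numRadius (M : Matrix ι ι ℂ) {x : EuclideanSpace ℂ ι} (hx : ‖x‖ = 1) :
    ‖⟪x, toEuclideanLin M x⟫_ℂ‖ ≤ numRadius M := by
  refine le_csSup ⟨‖toEuclideanCLM (𝕜 := ℂ) M‖, ?_⟩ ⟨x, hx, rfl⟩
  rintro r ⟨y, hy, rfl⟩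
  calc ‖⟪y, toEuclideanLin M y⟫_ℂ‖ ≤ ‖y‖ * ‖toEuclideanCLM (𝕜 := ℂ) M y‖ := norm_inner_le_norm _ _
    _ ≤ ‖toEuclideanCLM (𝕜 := ℂ) M‖ := by
      simpa [hy] using (toEuclideanCLM (𝕜 := ℂ) M).le_opNorm y

lemma numRadius_nonneg (M : Matrix ι ι ℂ) : 0 ≤ numRadius M :=
  Real.sSup_nonneg <| by rintro r ⟨x, -, rfl⟩; exact norm_nonneg _

lemma numRadius_le_of_forall_norm_inner_le {M : Matrix ι ι ℂ} {c : ℝ} (hc : 0 ≤ c)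
    (h : ∀ x : EuclideanSpace ℂ ι, ‖x‖ = 1 → ‖⟪x, toEuclideanLin M x⟫_ℂ‖ ≤ c) :
    numRadius M ≤ c :=
  Real.sSup_le (by rintro r ⟨x, hx, rfl⟩; exact h x hx) hc

lemma UnitSim.numRadius_le {A : Matrix ι ι ℂ} {B : Matrix κ κ ℂ} (h : UnitSim A B) :
    numRadius B ≤ numRadius A := by
  obtain ⟨e, he⟩ := h
  refine numRadius_le_of_forall_norm_inner_le (numRadius_nonneg A) fun x hx => ?_
  have hx' : ‖e.symm x‖ = 1 := by rwa [LinearIsometryEquiv.norm_map]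
  calc ‖⟪x, toEuclideanLin B x⟫_ℂ‖ = ‖⟪e (e.symm x), e (toEuclideanLin A (e.symm x))⟫_ℂ‖ := by
        rw [← he, e.apply_symm_apply]
    _ = ‖⟪e.symm x, toEuclideanLin A (e.symm x)⟫_ℂ‖ := by rw [e.inner_map_map]
    _ ≤ numRadius A := norm_inner_le_numRadius A hx'

lemma numRadius_toBlocks₂₂_le (M : Matrix (κ ⊕ ι) (κ ⊕ ι) ℂ) :
    numRadius M.toBlocks₂₂ ≤ numRadius M := by
  refine numRadius_le_of_forall_norm_inner_le (numRadius_nonneg M) fun x hx => ?_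
  set y : EuclideanSpace ℂ (κ ⊕ ι) := WithLp.toLp 2 (Sum.elim 0 x)
  have hy : ‖y‖ = 1 := by
    rw [← hx, EuclideanSpace.norm_eq, EuclideanSpace.norm_eq, Fintype.sum_sum_type]
    simp [y]
  have hxy : ⟪x, toEuclideanLin M.toBlocks₂₂ x⟫_ℂ = ⟪y, toEuclideanLin M y⟫_ℂ := by
    simp [y, PiLp.inner_apply, Fintype.sum_sum_type, toBlocks₂₂, mulVec, dotProduct]
  exact hxy ▸ norm_inner_le_numRadius M hy

lemma unitSim_of_orthonormalBasis (T : Matrix ι ι ℂ)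
    (b : OrthonormalBasis κ ℂ (EuclideanSpace ℂ ι)) :
    UnitSim T (Matrix.of fun t s => ⟪b t, toEuclideanLin T (b s)⟫_ℂ) := by
  refine ⟨b.repr, fun x => ?_⟩
  ext t
  conv_rhs => rw [b.repr_apply_apply, ← b.sum_repr x, map_sum, inner_sum]
  simp [toLpLin_apply, mulVec, dotProduct, inner_smul_right, mul_comm]

lemma exists_unitSim_fromBlocks {k : ℕ} (T : Matrix ι ι ℂ) (J : Matrix κ κ ℂ)
    {v : κ → EuclideanSpace ℂ ι} (hv : Orthonormal ℂ v)
    (hT : ∀ s, toEuclideanLin T (v s) = ∑ l, J l s • v l)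
    (hTH : ∀ s, toEuclideanLin Tᴴ (v s) ∈ Submodule.span ℂ (Set.range v))
    (hk : Fintype.card ι = Fintype.card κ + k) :
    ∃ B : Matrix (Fin k) (Fin k) ℂ, UnitSim T (fromBlocks J 0 0 B) := by
  obtain ⟨b, hbv, hbw⟩ := hv.exists_orthonormalBasis_sum (k := k) (by simpa using hk)
  set M := Matrix.of fun t s => ⟪b t, toEuclideanLin T (b s)⟫_ℂ
  have hTv : ∀ s, toEuclideanLin T (v s) ∈ Submodule.span ℂ (Set.range v) := fun s =>
    hT s ▸ Submodule.sum_mem _ fun l _ =>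
      Submodule.smul_mem _ _ (Submodule.subset_span (Set.mem_range_self l))
  have h₁₁ : M.toBlocks₁₁ = J := by
    ext t s
    simp [M, toBlocks₁₁, hbv, hT, hv.inner_right_fintype]
  have h₁₂ : M.toBlocks₁₂ = 0 := by
    ext t i
    simp only [M, toBlocks₁₂, of_apply, hbv, Matrix.zero_apply]
    rw [← LinearMap.adjoint_inner_left, ← toEuclideanLin_conjTranspose_eq_adjoint]
    exact Submodule.inner_right_of_mem_orthogonal (hTH t) (hbw i)
  have h₂₁ : M.toBlocks₂₁ = 0 := by
    ext i s
    simp only [M, toBlocks₂₁, of_apply, hbv, Matrix.zero_apply]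
    exact Submodule.inner_left_of_mem_orthogonal (hTv s) (hbw i)
  refine ⟨M.toBlocks₂₂, ?_⟩
  rw [← h₁₁, ← h₁₂, ← h₂₁, fromBlocks_toBlocks]
  exact unitSim_of_orthonormalBasis T b

end MatrixOperator

section Kronecker

variable {ι κ : Type*} [Fintype ι] [Fintype κ]

def kroneckerColumn (y : EuclideanSpace ℂ (ι × κ)) (j : κ) : EuclideanSpace ℂ ι :=
  WithLp.toLp 2 fun i => y (i, j)

lemma sum_norm_sq_kroneckerColumn (y : EuclideanSpace ℂ (ι × κ)) :
    ∑ j, ‖kroneckerColumn y j‖ ^ 2 = ‖y‖ ^ 2 := by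
  simp only [EuclideanSpace.norm_sq_eq, Fintype.sum_prod_type, kroneckerColumn]
  exact Finset.sum_comm

lemma inner_toEuclideanLin_kronecker [DecidableEq ι] [DecidableEq κ] (A : Matrix ι ι ℂ)
    (M : Matrix κ κ ℂ) (y : EuclideanSpace ℂ (ι × κ)) :
    ⟪y, toEuclideanLin (A ⊗ₖ M) y⟫_ℂ =
      ∑ j, ∑ l, M j l * ⟪kroneckerColumn y j, toEuclideanLin A (kroneckerColumn y l)⟫_ℂ := by
  simp only [PiLp.inner_apply, RCLike.inner_apply, toLpLin_apply, mulVec, dotProduct,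
    Fintype.sum_prod_type, kroneckerMap_apply, kroneckerColumn, Finset.mul_sum]
  rw [Finset.sum_comm]
  refine Finset.sum_congr rfl fun j _ => ?_
  simp only [Finset.sum_mul, Finset.mul_sum]
  conv_rhs => rw [Finset.sum_comm]
  refine Finset.sum_congr rfl fun i _ => ?_
  rw [Finset.sum_comm]
  exact Finset.sum_congr rfl fun k _ => Finset.sum_congr rfl fun l _ => by ring

lemma numRadius_kronecker_le [DecidableEq ι] [DecidableEq κ] {A : Matrix ι ι ℂ}
    (hA : opNorm A ≤ 1) {M : Matrix κ κ ℂ} (hM : ∀ j l, 0 ≤ M j l) :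
    numRadius (A ⊗ₖ M) ≤ numRadius M := by
  refine numRadius_le_of_forall_norm_inner_le (numRadius_nonneg M) fun y hy => ?_
  set z := kroneckerColumn y
  set a : EuclideanSpace ℂ κ := WithLp.toLp 2 fun j => (‖z j‖ : ℂ)
  have ha : ‖a‖ = 1 := by
    rw [← hy, ← pow_left_inj₀ (norm_nonneg _) (norm_nonneg _) two_ne_zero,
      EuclideanSpace.norm_sq_eq, ← sum_norm_sq_kroneckerColumn]
    simp [a, z]
  have hAz : ∀ j l, ‖⟪z j, toEuclideanLin A (z l)⟫_ℂ‖ ≤ ‖z j‖ * ‖z l‖ := fun j l =>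
    (norm_inner_le_norm _ _).trans <| mul_le_mul_of_nonneg_left
      (norm_toEuclideanLin_apply_le hA (z l)) (norm_nonneg _)
  have hMa : ⟪a, toEuclideanLin M a⟫_ℂ = ((∑ j, ∑ l, ‖M j l‖ * (‖z j‖ * ‖z l‖) : ℝ) : ℂ) := by
    simp only [PiLp.inner_apply, RCLike.inner_apply, toLpLin_apply, mulVec, dotProduct,
      Complex.ofReal_sum, Finset.sum_mul, Complex.conj_ofReal, a]
    refine Finset.sum_congr rfl fun j _ => Finset.sum_congr rfl fun l _ => ?_
    push_cast
    rw [Complex.norm_of_nonneg' (hM j l)]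
    ring
  calc ‖⟪y, toEuclideanLin (A ⊗ₖ M) y⟫_ℂ‖
      ≤ ∑ j, ∑ l, ‖M j l‖ * (‖z j‖ * ‖z l‖) := by
        rw [inner_toEuclideanLin_kronecker]
        refine (norm_sum_le _ _).trans <| Finset.sum_le_sum fun j _ =>
          (norm_sum_le _ _).trans <| Finset.sum_le_sum fun l _ => ?_
        rw [norm_mul]
        exact mul_le_mul_of_nonneg_left (hAz j l) (norm_nonneg _)
    _ = ‖⟪a, toEuclideanLin M a⟫_ℂ‖ := by
        rw [hMa, Complex.norm_real, Real.norm_of_nonneg (by positivity)]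
    _ ≤ numRadius M := norm_inner_le_numRadius M ha

def kroneckerSingle [DecidableEq κ] (c : EuclideanSpace ℂ ι) (s : κ) : EuclideanSpace ℂ (ι × κ) :=
  WithLp.toLp 2 fun p => if p.2 = s then c p.1 else 0

lemma inner_kroneckerSingle [DecidableEq κ] (c d : EuclideanSpace ℂ ι) (s t : κ) :
    ⟪kroneckerSingle c s, kroneckerSingle d t⟫_ℂ = if s = t then ⟪c, d⟫_ℂ else 0 := by
  split_ifs with h
  · subst h
    simp [kroneckerSingle, PiLp.inner_apply, Fintype.sum_prod_type]
  · simp [kroneckerSingle, PiLp.inner_apply, Fintype.sum_prod_type, Ne.symm h]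

lemma toEuclideanLin_kronecker_kroneckerSingle [DecidableEq ι] [DecidableEq κ] (A : Matrix ι ι ℂ)
    (M : Matrix κ κ ℂ) (c : EuclideanSpace ℂ ι) (s : κ) :
    toEuclideanLin (A ⊗ₖ M) (kroneckerSingle c s) =
      ∑ l, M l s • kroneckerSingle (toEuclideanLin A c) l := by
  ext ⟨i, l⟩
  simp [kroneckerSingle, toLpLin_apply, mulVec, dotProduct, Fintype.sum_prod_type,
    Finset.mul_sum, mul_assoc, mul_left_comm (M _ _)]

end Kronecker

lemma jordan_nonneg (m : ℕ) (j l : Fin m) : 0 ≤ Jordan m j l := by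
  unfold Jordan
  split_ifs <;> norm_num

lemma conjTranspose_jordan (m : ℕ) : (Jordan m)ᴴ = (Jordan m)ᵀ := by
  ext j l
  simp [Jordan, apply_ite]

lemma jordan_smul_congr {E : Type*} [AddCommMonoid E] [Module ℂ E] {m : ℕ} {l s : Fin m} {x y : E}
    (h : (l : ℕ) + 1 = s → x = y) : Jordan m l s • x = Jordan m l s • y := by
  unfold Jordan
  split_ifs with hls
  · rw [h hls]
  · simp only [zero_smul]

lemma exists_unitSim_kronecker_jordan {ι : Type*} [Fintype ι] [DecidableEq ι] {m k : ℕ}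
    {A : Matrix ι ι ℂ} (hA : opNorm A ≤ 1) {x : EuclideanSpace ℂ ι} (hx : ‖x‖ = 1)
    (hAx : ‖toEuclideanLin (A ^ (m - 1)) x‖ = 1) (hk : Fintype.card ι * m = m + k) :
    ∃ B : Matrix (Fin k) (Fin k) ℂ, UnitSim (A ⊗ₖ Jordan m) (fromBlocks (Jordan m) 0 0 B) := by
  set f := toEuclideanCLM (𝕜 := ℂ) A
  set q : ℕ → EuclideanSpace ℂ ι := fun j => (f ^ j) x
  have hq : ∀ j ≤ m - 1, ‖q j‖ = 1 := fun j hj =>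
    (f.norm_pow_apply_eq_of_le hA (by rwa [hx, ← map_pow]) hj).trans hx
  have hq_succ : ∀ j, toEuclideanLin A (q j) = q (j + 1) := fun j => by
    simp only [q, pow_succ']
    rfl
  have hq_adj : ∀ j, j + 1 ≤ m - 1 → toEuclideanLin Aᴴ (q (j + 1)) = q j := fun j hj => by
    rw [← hq_succ, toEuclideanLin_conjTranspose_apply]
    refine f.adjoint_apply_apply_eq_self hA ?_
    rw [show f (q j) = q (j + 1) from hq_succ j, hq _ hj, hq _ (by omega)]
  set v : Fin m → EuclideanSpace ℂ (ι × Fin m) := fun j => kroneckerSingle (q (m - 1 - j)) j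
  have hv : Orthonormal ℂ v := by
    rw [orthonormal_iff_ite]
    intro s t
    simp only [v, inner_kroneckerSingle]
    split_ifs with hst
    · subst hst
      rw [inner_self_eq_norm_sq_to_K, hq _ (Nat.sub_le _ _)]
      norm_num
    · rfl
  refine exists_unitSim_fromBlocks _ _ hv (fun s => ?_) (fun t => ?_) (by simpa using hk)
  · rw [toEuclideanLin_kronecker_kroneckerSingle]
    refine Finset.sum_congr rfl fun l _ => jordan_smul_congr fun h => ?_
    rw [hq_succ, show m - 1 - s + 1 = m - 1 - l by omega]
  · rw [conjTranspose_kronecker, toEuclideanLin_kronecker_kroneckerSingle, conjTranspose_jordan]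
    refine Submodule.sum_mem _ fun l _ => ?_
    rw [transpose_apply, jordan_smul_congr (y := v l) fun h => ?_]
    · exact Submodule.smul_mem _ _ (Submodule.subset_span (Set.mem_range_self l))
    rw [show m - 1 - t = m - 1 - l + 1 by omega, hq_adj _ (by omega)]

theorem stmt7 (n m : ℕ) (A : Matrix (Fin n) (Fin n) ℂ)
    (h1 : opNorm A = 1) (h2 : opNorm (A ^ (m - 1)) = 1) :
    ∃ B : Matrix (Fin (n * m - m)) (Fin (n * m - m)) ℂ, numRadius B ≤ numRadius (Jordan m) ∧
      UnitSim (A ⊗ₖ Jordan m) (Matrix.fromBlocks (Jordan m) 0 0 B) := by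
  have hn : n ≠ 0 := by
    rintro rfl
    simp [opNorm, Subsingleton.elim A 0] at h1
  have : NeZero n := ⟨hn⟩
  have hk : Fintype.card (Fin n) * m = m + (n * m - m) := by
    have := Nat.le_mul_of_pos_left m (Nat.pos_of_ne_zero hn)
    rw [Fintype.card_fin]
    omega
  obtain ⟨x, hx, hAx⟩ :=
    (toEuclideanCLM (𝕜 := ℂ) (A ^ (m - 1))).exists_norm_eq_one_and_norm_apply_eq_opNorm
  obtain ⟨B, hB⟩ := exists_unitSim_kronecker_jordan h1.le hx (hAx.trans h2) hk
  refine ⟨B, ?_, hB⟩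
  calc numRadius B = numRadius (fromBlocks (Jordan m) 0 0 B).toBlocks₂₂ := by
        rw [toBlocks_fromBlocks₂₂]
    _ ≤ numRadius (fromBlocks (Jordan m) 0 0 B) := numRadius_toBlocks₂₂_le _
    _ ≤ numRadius (A ⊗ₖ Jordan m) := hB.numRadius_le
    _ ≤ numRadius (Jordan m) := numRadius_kronecker_le h1.le (jordan_nonneg m)
end

section
/- For the matrix A = J_2 ⊕ [a] with 0 < |a| ≤ 1/2 (a complex scalar block adjoined to the 2-by-2 nilpotent Jordan block), one has ‖A‖ = 1, w(A ⊗ A) = w(A) = 1/2, yet ‖A^2‖ < 1 and A is not nilpotent. -/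
open scoped Kronecker InnerProductSpace

/-! The C*-identity `‖AᴴA‖ = ‖A‖²` with `AᴴA = diag(0, 1, |a|²)`, and `A² = diag(0, 0, a²)`, give
`‖A‖ = 1` and `‖A²‖ = |a|² ≤ 1/4`, since the `ℓ²` operator norm of a diagonal matrix is its largest
entry. For the numerical radii, `|⟪x, M x⟫| ≤ ∑ᵢⱼ |Mᵢⱼ| |xᵢ| |xⱼ|`; for `M = A` and `M = A ⊗ A` this
real quadratic form is at most `‖x‖² / 2` by AM-GM and `|a| ≤ 1/2`, and the value `1/2` is attained
at `(e₀ + e₁)/√2`, resp. `(e₀₀ + e₁₁)/√2`. Finally, `A` is not nilpotent because its trace `a`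
is not. -/

open Matrix
open scoped Matrix.Norms.L2Operator

section NumericalRadius

variable {n : Type*} [Fintype n] [DecidableEq n]

lemma inner_toEuclideanLin_self (M : Matrix n n ℂ) (x : EuclideanSpace ℂ n) :
    ⟪x, toEuclideanLin M x⟫_ℂ = ∑ i, ∑ j, star (x i) * M i j * x j := by
  simp only [PiLp.inner_apply, toLpLin_apply, mulVec, dotProduct, Finset.sum_mul,
    RCLike.inner_apply]
  refine Finset.sum_congr rfl fun i _ => Finset.sum_congr rfl fun j _ => ?_
  rw [starRingEnd_apply]
  ring

lemma norm_inner_toEuclideanLin_self_le (M : Matrix n n ℂ) (x : EuclideanSpace ℂ n) :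
    ‖⟪x, toEuclideanLin M x⟫_ℂ‖ ≤ ∑ i, ∑ j, ‖M i j‖ * (‖x i‖ * ‖x j‖) := by
  rw [inner_toEuclideanLin_self]
  refine (norm_sum_le _ _).trans (Finset.sum_le_sum fun i _ => (norm_sum_le _ _).trans_eq ?_)
  refine Finset.sum_congr rfl fun j _ => ?_
  rw [norm_mul, norm_mul, norm_star]
  ring

lemma le_numRadius (M : Matrix n n ℂ) {x : EuclideanSpace ℂ n} (hx : ‖x‖ = 1) :
    ‖⟪x, toEuclideanLin M x⟫_ℂ‖ ≤ numRadius M := by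
  refine le_csSup ⟨‖toEuclideanCLM (𝕜 := ℂ) M‖, ?_⟩ ⟨x, hx, rfl⟩
  rintro _ ⟨y, hy, rfl⟩
  calc ‖⟪y, toEuclideanLin M y⟫_ℂ‖ ≤ ‖y‖ * ‖toEuclideanCLM (𝕜 := ℂ) M y‖ :=
        norm_inner_le_norm _ _
    _ ≤ ‖toEuclideanCLM (𝕜 := ℂ) M‖ := by
      simpa [hy] using (toEuclideanCLM (𝕜 := ℂ) M).le_opNorm y

lemma numRadius_le_of_quadForm_le {M : Matrix n n ℂ} {c : ℝ} (hc : 0 ≤ c)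
    (h : ∀ u : n → ℝ, ∑ i, ∑ j, ‖M i j‖ * (u i * u j) ≤ c * ∑ i, u i ^ 2) :
    numRadius M ≤ c := by
  refine Real.sSup_le ?_ hc
  rintro _ ⟨x, hx, rfl⟩
  calc ‖⟪x, toEuclideanLin M x⟫_ℂ‖ ≤ ∑ i, ∑ j, ‖M i j‖ * (‖x i‖ * ‖x j‖) :=
        norm_inner_toEuclideanLin_self_le M x
    _ ≤ c * ∑ i, ‖x i‖ ^ 2 := h _
    _ = c := by rw [← EuclideanSpace.norm_sq_eq, hx, one_pow, mul_one]

lemma norm_single_add_single {i j : n} (hij : i ≠ j) :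
    ‖EuclideanSpace.single i (1 : ℂ) + EuclideanSpace.single j 1‖ = √2 := by
  have h := norm_add_sq_eq_norm_sq_add_norm_sq_of_inner_eq_zero (𝕜 := ℂ)
    (EuclideanSpace.single i (1 : ℂ)) (EuclideanSpace.single j 1)
    (by simp [EuclideanSpace.inner_single_left, hij.symm])
  simp only [PiLp.norm_single, norm_one] at h
  rw [← Real.sqrt_mul_self (norm_nonneg _), h]
  norm_num

lemma norm_add_add_add_div_two_le_numRadius (M : Matrix n n ℂ) {i j : n} (hij : i ≠ j) :
    ‖M i i + M i j + M j i + M j j‖ / 2 ≤ numRadius M := by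
  set v := EuclideanSpace.single i (1 : ℂ) + EuclideanSpace.single j 1
  have hv : ⟪v, toEuclideanLin M v⟫_ℂ = M i i + M i j + M j i + M j j := by
    simp only [v, map_add, inner_add_left, inner_add_right, EuclideanSpace.inner_single_left,
      map_one, one_mul, ofLp_toLpLin, PiLp.ofLp_single, toLin'_apply, mulVec_single_one, col_apply]
    ring
  have hx : ‖((√2)⁻¹ : ℂ) • v‖ = 1 := by
    rw [norm_smul, norm_single_add_single hij, norm_inv, Complex.norm_real, Real.norm_eq_abs,
      abs_of_nonneg (Real.sqrt_nonneg 2)]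
    exact inv_mul_cancel₀ (by positivity)
  convert le_numRadius M hx using 1
  rw [map_smul, inner_smul_left, inner_smul_right, hv, norm_mul, norm_mul, ← mul_assoc]
  simp [abs_of_nonneg (Real.sqrt_nonneg 2), ← mul_inv, div_eq_inv_mul]

end NumericalRadius

lemma norm_vecCons_three {E : Type*} [SeminormedAddCommGroup E] (x y z : E) :
    ‖![x, y, z]‖ = max ‖x‖ (max ‖y‖ ‖z‖) := by
  simp [Pi.norm_def, Fin.univ_succ]

section DiagJ2

variable (a : ℂ)

def diagJ2 : Matrix (Fin 3) (Fin 3) ℂ := !![0, 1, 0; 0, 0, 0; 0, 0, a]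

lemma conjTranspose_diagJ2_mul_self : (diagJ2 a)ᴴ * diagJ2 a = diagonal ![0, 1, star a * a] := by
  ext i j
  fin_cases i <;> fin_cases j <;> simp [diagJ2, mul_apply, Fin.sum_univ_three]

lemma diagJ2_sq : diagJ2 a ^ 2 = diagonal ![0, 0, a ^ 2] := by
  ext i j
  fin_cases i <;> fin_cases j <;> simp [diagJ2, sq, mul_apply, Fin.sum_univ_three]

lemma opNorm_diagJ2 (ha : ‖a‖ ≤ 1 / 2) : opNorm (diagJ2 a) = 1 := by
  have h := l2_opNorm_conjTranspose_mul_self (diagJ2 a)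
  rw [conjTranspose_diagJ2_mul_self, l2_opNorm_diagonal, norm_vecCons_three, norm_zero, norm_one,
    norm_mul, norm_star, max_eq_left (by nlinarith [norm_nonneg a] : ‖a‖ * ‖a‖ ≤ 1),
    max_eq_right zero_le_one] at h
  rw [opNorm, l2_opNorm_toEuclideanCLM, ← pow_eq_one_iff_of_nonneg (norm_nonneg _) two_ne_zero,
    sq, h]

lemma opNorm_diagJ2_sq : opNorm (diagJ2 a ^ 2) = ‖a‖ ^ 2 := by
  rw [opNorm, l2_opNorm_toEuclideanCLM, diagJ2_sq, l2_opNorm_diagonal, norm_vecCons_three]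
  simp

lemma numRadius_diagJ2 (ha : ‖a‖ ≤ 1 / 2) : numRadius (diagJ2 a) = 1 / 2 := by
  refine le_antisymm (numRadius_le_of_quadForm_le (by norm_num) fun u => ?_) ?_
  · simp only [diagJ2, of_apply, cons_val', cons_val_fin_one, Fin.sum_univ_three, cons_val_zero,
      cons_val_one, cons_val, norm_zero, zero_mul, norm_one, one_mul, zero_add, add_zero]
    nlinarith [sq_nonneg (u 0 - u 1), sq_nonneg (u 2), norm_nonneg a]
  · simpa [diagJ2] using
      norm_add_add_add_div_two_le_numRadius (diagJ2 a) (show (0 : Fin 3) ≠ 1 by decide)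

lemma numRadius_kronecker_diagJ2 (ha : ‖a‖ ≤ 1 / 2) : numRadius (diagJ2 a ⊗ₖ diagJ2 a) = 1 / 2 := by
  refine le_antisymm (numRadius_le_of_quadForm_le (by norm_num) fun u => ?_) ?_
  · simp only [diagJ2, kroneckerMap_apply, of_apply, cons_val', cons_val_fin_one, norm_mul,
      Fintype.sum_prod_type, Fin.sum_univ_three, cons_val_zero, cons_val_one, cons_val, norm_zero,
      mul_zero, zero_mul, norm_one, mul_one, zero_add, add_zero, one_mul]
    have hsq (s t : ℝ) : ‖a‖ * (s * t) ≤ (s ^ 2 + t ^ 2) / 4 := by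
      nlinarith [mul_nonneg (norm_nonneg a) (sq_nonneg (s - t)), sq_nonneg (s + t)]
    nlinarith [sq_nonneg (u (0, 0) - u (1, 1)), hsq (u (0, 2)) (u (1, 2)),
      hsq (u (2, 0)) (u (2, 1)), mul_le_mul ha ha (norm_nonneg a) (by norm_num),
      sq_nonneg (u (2, 2))]
  · simpa [diagJ2] using norm_add_add_add_div_two_le_numRadius (diagJ2 a ⊗ₖ diagJ2 a)
      (show ((0, 0) : Fin 3 × Fin 3) ≠ (1, 1) by decide)

lemma not_isNilpotent_diagJ2 (ha : a ≠ 0) : ¬IsNilpotent (diagJ2 a) := fun h =>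
  ha (by simpa [diagJ2, trace_fin_three] using (isNilpotent_trace_of_isNilpotent h).eq_zero)

end DiagJ2

theorem stmt15 (a : ℂ) (ha : a ≠ 0) (ha2 : ‖a‖ ≤ 1 / 2)
    (A : Matrix (Fin 3) (Fin 3) ℂ) (hA : A = !![0, 1, 0; 0, 0, 0; 0, 0, a]) :
    opNorm A = 1 ∧ numRadius (A ⊗ₖ A) = 1 / 2 ∧ numRadius A = 1 / 2 ∧
      opNorm (A ^ 2) < 1 ∧ ¬ IsNilpotent A := by
  obtain rfl : A = diagJ2 a := hA
  refine ⟨opNorm_diagJ2 a ha2, numRadius_kronecker_diagJ2 a ha2, numRadius_diagJ2 a ha2, ?_,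
    not_isNilpotent_diagJ2 a ha⟩
  rw [opNorm_diagJ2_sq]
  nlinarith [norm_nonneg a]
end
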